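/- arXiv:2410.08349 — 11 statements merged into one kernel-verified Lean document; each statement's English description precedes it below -/
import Mathlib

section
/- Let B be a G-invariant set of bases of a rank-2 matroid on a finite cyclic group Z_n. If f_{mi} ⊆ B for a positive integer m and i ∈ Z_n, then f_i ⊆ B, where f_j = {{a, a+j} : a ∈ Z_n}. -/
/-- The translation orbit `f_j = {{a, a+j} : a ∈ Z_n}`. -/
def pairOrbitZ (n : ℕ) (j : ZMod n) : Set (Finset (ZMod n)) :=
  {s | ∃ a : ZMod n, s = {a, a + j}}

/-- `B` is invariant under translation. -/
def TransInvariant (n : ℕ) (B : Set (Finset (ZMod n))) : Prop :=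
  ∀ t : ZMod n, ∀ s ∈ B, s.image (fun x => t + x) ∈ B

/-- The (strong) matroid basis exchange axiom. -/
def ExchangeAxiom {α : Type*} [DecidableEq α] (B : Set (Finset α)) : Prop :=
  ∀ X ∈ B, ∀ Y ∈ B, ∀ x ∈ X, x ∉ Y → ∃ y ∈ Y, y ∉ X ∧ insert y (X.erase x) ∈ B

/-- If `B` is a translation-invariant set of bases of a rank-2 matroid on `Z_n` and
`f_{m*i} ⊆ B` for a positive integer `m`, then `f_i ⊆ B`. -/
theorem stmt_3 (n : ℕ) (hn : 0 < n) (B : Set (Finset (ZMod n)))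
    (hcard : ∀ s ∈ B, s.card = 2) (hne : B.Nonempty)
    (hinv : TransInvariant n B) (hexch : ExchangeAxiom B)
    (m : ℕ) (hm : 0 < m) (i : ZMod n)
    (h : pairOrbitZ n ((m : ZMod n) * i) ⊆ B) :
    pairOrbitZ n i ⊆ B := by
  have hB : ({0, (m : ZMod n) * i} : Finset (ZMod n)) ∈ B := by
    apply h; exact ⟨0, by simp⟩
  have hi : i ≠ 0 := by
    intro h0
    have := hcard _ hB
    rw [h0] at this
    simp at this
  have key : ∀ k : ℕ, ({0, (k : ZMod n) * i} : Finset (ZMod n)) ∈ B →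
      ({0, i} : Finset (ZMod n)) ∈ B := by
    intro k
    induction k with
    | zero =>
      intro hk
      have := hcard _ hk
      simp at this
    | succ k ih =>
      intro hk
      set c : ZMod n := ((k + 1 : ℕ) : ZMod n) * i with hc
      by_cases h1 : c = i
      · rwa [h1] at hk
      by_cases h2 : c = -i
      · have h' := hinv i _ hk
        have himg : Finset.image (fun x => i + x) ({0, c} : Finset (ZMod n))
            = ({0, i} : Finset (ZMod n)) := by
          rw [h2]
          ext x
          simp [Finset.mem_insert, or_comm]
        rwa [himg] at h'
      · have hc0 : c ≠ 0 := by
          intro e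
          have := hcard _ hk
          rw [e] at this
          simp at this
        have hY : ({-i, c - i} : Finset (ZMod n)) ∈ B := by
          have h' := hinv (-i) _ hk
          have himg : Finset.image (fun x => -i + x) ({0, c} : Finset (ZMod n))
              = ({-i, c - i} : Finset (ZMod n)) := by
            ext x
            simp [neg_add_eq_sub]
          rwa [himg] at h'
        have hxX : c ∈ ({0, c} : Finset (ZMod n)) := by simp
        have hxY : c ∉ ({-i, c - i} : Finset (ZMod n)) := by
          simp only [Finset.mem_insert, Finset.mem_singleton]
          push_neg
          refine ⟨h2, ?_⟩
          intro e
          apply hi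
          have : c - (c - i) = 0 := by rw [← e]; simp
          simpa using this
        obtain ⟨y, hyY, hyX, hins⟩ := hexch _ hk _ hY c hxX hxY
        have herase : ({0, c} : Finset (ZMod n)).erase c = {0} := by
          ext x
          simp only [Finset.mem_erase, Finset.mem_insert, Finset.mem_singleton]
          constructor
          · rintro ⟨hne', h0 | h0⟩ <;> tauto
          · rintro rfl; exact ⟨Ne.symm hc0, Or.inl rfl⟩
        rw [herase] at hins
        simp only [Finset.mem_insert, Finset.mem_singleton] at hyY
        rcases hyY with rfl | rfl
        · -- y = -i, so {-i, 0} ∈ B; translate by i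
          have h' := hinv i _ hins
          have himg : Finset.image (fun x => i + x) (insert (-i) ({0} : Finset (ZMod n)))
              = ({0, i} : Finset (ZMod n)) := by
            ext x
            simp [Finset.mem_insert, or_comm]
          rwa [himg] at h'
        · -- y = c - i = k * i
          apply ih
          have hck : c - i = (k : ZMod n) * i := by
            rw [hc]
            push_cast
            ring
          have : insert (c - i) ({0} : Finset (ZMod n))
              = ({0, (k : ZMod n) * i} : Finset (ZMod n)) := by
            rw [hck]
            ext x
            simp [Finset.mem_insert, or_comm]
          rwa [this] at hins
  have h01 : ({0, i} : Finset (ZMod n)) ∈ B := key m hB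
  rintro s ⟨a, rfl⟩
  have h' := hinv a _ h01
  have himg : Finset.image (fun x => a + x) ({0, i} : Finset (ZMod n))
      = ({a, a + i} : Finset (ZMod n)) := by
    ext x
    simp
  rwa [himg] at h'
end

section
/- Let B be a translation-invariant set of bases of a rank-2 matroid on Z_n. If d divides n, k ∈ Z_n with kd ≠ 0, and f_{kd} ⊆ B, then f_{ud} ⊆ B for every unit u of Z_n. -/
section Aux
variable {n : ℕ} {B : Set (Finset (ZMod n))}

lemma aux_translate (hinv : TransInvariant n B) (t a b : ZMod n)
    (hab : ({a, b} : Finset (ZMod n)) ∈ B) : ({a + t, b + t} : Finset (ZMod n)) ∈ B := by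
  have h := hinv t _ hab
  have himg : ({a, b} : Finset (ZMod n)).image (fun x => t + x) = {a + t, b + t} := by
    simp [Finset.image_insert, add_comm]
  rwa [himg] at h

lemma aux_trans (hcard : ∀ s ∈ B, s.card = 2) (hne : B.Nonempty)
    (hinv : TransInvariant n B) (hexch : ExchangeAxiom B)
    (x y z : ZMod n) (hxy : x ≠ y) (hyz : y ≠ z) (hxz : x ≠ z)
    (hnxy : ({x, y} : Finset (ZMod n)) ∉ B) (hnyz : ({y, z} : Finset (ZMod n)) ∉ B) :
    ({x, z} : Finset (ZMod n)) ∉ B := by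
  intro hXZ
  obtain ⟨s, hs⟩ := hne
  obtain ⟨a, b, hab, rfl⟩ := Finset.card_eq_two.mp (hcard s hs)
  have hyw : ({y, y + (b - a)} : Finset (ZMod n)) ∈ B := by
    have h := aux_translate hinv (y - a) a b hs
    have h1 : a + (y - a) = y := by ring
    have h2 : b + (y - a) = y + (b - a) := by ring
    rwa [h1, h2] at h
  set w := y + (b - a) with hw
  have hwy : w ≠ y := by
    intro hq
    apply hab
    have hba : b - a = 0 := by
      have : y + (b - a) = y := hq
      linear_combination this
    exact (sub_eq_zero.mp hba).symm
  by_cases hwx : w = x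
  · exact hnxy (by rw [Finset.pair_comm]; exact hwx ▸ hyw)
  by_cases hwz : w = z
  · exact hnyz (hwz ▸ hyw)
  obtain ⟨y', hy'Y, hy'X, hins⟩ := hexch _ hyw _ hXZ w (by simp) (by simp [hwx, hwz])
  have herase : ({y, w} : Finset (ZMod n)).erase w = {y} := by
    rw [Finset.pair_comm]
    exact Finset.erase_insert (by simp [hwy])
  rw [herase] at hins
  rcases Finset.mem_insert.mp hy'Y with h1 | h1
  · exact hnxy (by rw [h1] at hins; exact hins)
  · have h1' : y' = z := by simpa using h1
    exact hnyz (by rw [Finset.pair_comm]; rw [h1'] at hins; exact hins)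

end Aux

/-- If `d ∣ n`, `k ∈ Z_n` with `k*d ≠ 0`, and `f_{k*d} ⊆ B`, then `f_{u*d} ⊆ B` for every
unit `u` of `Z_n`. -/
theorem stmt_4 (n : ℕ) (hn : 0 < n) (B : Set (Finset (ZMod n)))
    (hcard : ∀ s ∈ B, s.card = 2) (hne : B.Nonempty)
    (hinv : TransInvariant n B) (hexch : ExchangeAxiom B)
    (d : ℕ) (hd : d ∣ n) (k : ZMod n) (hk : k * (d : ZMod n) ≠ 0)
    (h : pairOrbitZ n (k * (d : ZMod n)) ⊆ B) :
    ∀ u : (ZMod n)ˣ, pairOrbitZ n ((u : ZMod n) * (d : ZMod n)) ⊆ B := by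
  haveI : NeZero n := ⟨hn.ne'⟩
  intro u s hs
  obtain ⟨a, rfl⟩ := hs
  suffices hkey : ({(0 : ZMod n), (u : ZMod n) * d} : Finset (ZMod n)) ∈ B by
    have h2 := aux_translate hinv a 0 ((u : ZMod n) * d) hkey
    rw [zero_add, add_comm ((u : ZMod n) * d) a] at h2
    exact h2
  by_contra hud
  have hP00 : ∀ x : ZMod n, ({x, x} : Finset (ZMod n)) ∉ B := by
    intro x hx
    have := hcard _ hx
    simp at this
  have hsymm : ∀ x y : ZMod n,
      ({x, y} : Finset (ZMod n)) ∈ B ↔ ({y, x} : Finset (ZMod n)) ∈ B := by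
    intro x y; rw [Finset.pair_comm]
  have hadd : ∀ i j : ZMod n, ({0, i} : Finset (ZMod n)) ∉ B →
      ({0, j} : Finset (ZMod n)) ∉ B → ({0, i + j} : Finset (ZMod n)) ∉ B := by
    intro i j hi hj
    by_cases hi0 : i = 0
    · simpa [hi0] using hj
    by_cases hj0 : j = 0
    · simpa [hj0] using hi
    by_cases hij0 : i + j = 0
    · rw [hij0]; exact hP00 0
    have hxy : i + j ≠ j := by
      intro hq; exact hi0 (by linear_combination hq)
    have h1 : ({i + j, j} : Finset (ZMod n)) ∉ B := by
      intro hm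
      apply hi
      rw [hsymm]
      have := aux_translate hinv (-j) (i + j) j hm
      simpa using this
    have h2 : ({j, (0 : ZMod n)} : Finset (ZMod n)) ∉ B := by
      intro hm; exact hj ((hsymm j 0).mp hm)
    have h3 := aux_trans hcard hne hinv hexch (i + j) j 0 hxy hj0 hij0 h1 h2
    intro hm; exact h3 ((hsymm 0 (i + j)).mp hm)
  have hsmul : ∀ j : ZMod n, ({0, j} : Finset (ZMod n)) ∉ B →
      ∀ m : ℕ, ({0, (m : ZMod n) * j} : Finset (ZMod n)) ∉ B := by
    intro j hj m
    induction m with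
    | zero => simpa using hP00 0
    | succ m ih =>
      have e : ((m + 1 : ℕ) : ZMod n) * j = (m : ZMod n) * j + j := by push_cast; ring
      rw [e]; exact hadd _ _ ih hj
  have hmul : ∀ j : ZMod n, ({0, j} : Finset (ZMod n)) ∉ B →
      ∀ c : ZMod n, ({0, c * j} : Finset (ZMod n)) ∉ B := by
    intro j hj c
    have := hsmul j hj c.val
    rwa [ZMod.natCast_val, ZMod.cast_id] at this
  have hdmem : ({(0 : ZMod n), (d : ZMod n)} : Finset (ZMod n)) ∉ B := by
    have hm := hmul _ hud ((u⁻¹ : (ZMod n)ˣ) : ZMod n)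
    have e : ((u⁻¹ : (ZMod n)ˣ) : ZMod n) * ((u : ZMod n) * d) = (d : ZMod n) := by
      rw [← mul_assoc, Units.inv_mul, one_mul]
    rwa [e] at hm
  have hkd := hmul _ hdmem k
  exact hkd (by simpa using h ⟨0, by rw [zero_add]⟩)
end

section
/- Every translation-invariant set of bases of a rank-2 matroid on Z_n contains f_u for every unit u ∈ Z_n^×, i.e. contains all pairs {a, a+u} with u a unit. -/
/-- Every translation-invariant set of bases of a rank-2 matroid on `Z_n` contains
`f_u` for every unit `u`. -/
theorem stmt_5 (n : ℕ) (hn : 0 < n) (B : Set (Finset (ZMod n)))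
    (hcard : ∀ s ∈ B, s.card = 2) (hne : B.Nonempty)
    (hinv : TransInvariant n B) (hexch : ExchangeAxiom B) :
    ∀ u : (ZMod n)ˣ, pairOrbitZ n (u : ZMod n) ⊆ B := by
  classical
  haveI : NeZero n := ⟨hn.ne'⟩
  -- translation transfer
  have key : ∀ t j : ZMod n, ({t, t + j} : Finset (ZMod n)) ∈ B ↔
      ({0, j} : Finset (ZMod n)) ∈ B := by
    intro t j
    constructor
    · intro h
      have := hinv (-t) _ h
      simpa [Finset.image_insert, add_assoc] using this
    · intro h
      have := hinv t _ h
      simpa [Finset.image_insert] using this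
  -- nonzero members of B give nonzero differences in B rooted at 0
  have keyneg : ∀ j : ZMod n, ({0, j} : Finset (ZMod n)) ∈ B →
      ({0, -j} : Finset (ZMod n)) ∈ B := by
    intro j h
    have h2 : ({0, j} : Finset (ZMod n)) = {j, j + -j} := by
      rw [add_neg_cancel, Finset.pair_comm]
    rw [h2, key] at h
    exact h
  have card_ne : ∀ j : ZMod n, ({0, j} : Finset (ZMod n)) ∈ B → j ≠ 0 := by
    intro j h hj
    have := hcard _ h
    subst hj
    simp at this
  -- the subgroup of "non-differences"
  set H : AddSubgroup (ZMod n) :=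
    { carrier := {j | j = 0 ∨ ({0, j} : Finset (ZMod n)) ∉ B}
      zero_mem' := Or.inl rfl
      neg_mem' := by
        rintro j (rfl | hj)
        · exact Or.inl (by simp)
        · refine Or.inr fun h => hj ?_
          simpa using keyneg _ h
      add_mem' := by
        rintro a b (rfl | ha) hb
        · simpa using hb
        rcases hb with rfl | hb
        · simpa using Or.inr ha
        by_cases ha0 : a = 0
        · subst ha0; simpa using Or.inr hb
        by_cases hb0 : b = 0
        · subst hb0; simpa using Or.inr ha
        by_cases hab : a + b = 0
        · exact Or.inl hab
        refine Or.inr fun h => ?_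
        -- h : {0, a+b} ∈ B , contradiction
        by_cases h2b : a + 2 * b = 0
        · -- then a + b = -b, so {0,-b} ∈ B, so {0,b} ∈ B
          have hb' : a + b = -b := by linear_combination h2b
          rw [hb'] at h
          have := keyneg _ h
          simp only [neg_neg] at this
          exact hb this
        · have hY : ({b, b + (a + b)} : Finset (ZMod n)) ∈ B := (key b (a + b)).2 h
          have hx0 : (0 : ZMod n) ∈ ({0, a + b} : Finset (ZMod n)) := by simp
          have hx0Y : (0 : ZMod n) ∉ ({b, b + (a + b)} : Finset (ZMod n)) := by
            simp only [Finset.mem_insert, Finset.mem_singleton]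
            push_neg
            constructor
            · exact fun h0 => hb0 h0.symm
            · intro h0
              apply h2b
              linear_combination -h0
          obtain ⟨y, hyY, hyX, hins⟩ := hexch _ h _ hY _ hx0 hx0Y
          have herase : ({0, a + b} : Finset (ZMod n)).erase 0 = {a + b} := by
            rw [Finset.erase_insert (by simpa using Ne.symm hab)]
          rw [herase] at hins
          simp only [Finset.mem_insert, Finset.mem_singleton] at hyY
          rcases hyY with rfl | rfl
          · -- {y, a+b} = {b, b + a} ∈ B gives {0,a} ∈ B
            have : ({y, y + a} : Finset (ZMod n)) ∈ B := by
              rw [show y + a = a + y from add_comm y a]; exact hins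
            exact ha ((key y a).1 this)
          · -- y = b + (a+b): {b+(a+b), a+b} ∈ B gives {0,b} ∈ B
            have e : ({b + (a + b), a + b} : Finset (ZMod n)) = {a + b, (a + b) + b} := by
              rw [Finset.pair_comm]
              congr 1
              ring
            rw [e] at hins
            exact hb ((key (a + b) b).1 hins) }
  have hHmem : ∀ j : ZMod n, j ∈ H ↔ (j = 0 ∨ ({0, j} : Finset (ZMod n)) ∉ B) := fun _ => Iff.rfl
  -- H is proper: B has an element, giving d - c ∉ H
  obtain ⟨s, hs⟩ := hne
  obtain ⟨c, d, hcd, rfl⟩ := Finset.card_eq_two.1 (hcard _ hs)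
  have hdc : ({0, d - c} : Finset (ZMod n)) ∈ B := by
    have e : ({c, d} : Finset (ZMod n)) = {c, c + (d - c)} := by
      congr 1
      ring
    rw [e] at hs
    exact (key c (d - c)).1 hs
  have hdcH : d - c ∉ H := by
    rw [hHmem]
    push_neg
    exact ⟨sub_ne_zero.2 hcd.symm, hdc⟩
  -- units are not in H
  intro u s' hs'
  have huH : (u : ZMod n) ∉ H := by
    intro huH
    apply hdcH
    have hm : (((d - c) * ↑u⁻¹).val • (u : ZMod n)) ∈ H :=
      AddSubgroup.nsmul_mem H huH _
    have he : (((d - c) * ↑u⁻¹).val • (u : ZMod n)) = d - c := by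
      rw [nsmul_eq_mul, ZMod.natCast_val, ZMod.cast_id, mul_assoc, Units.inv_mul, mul_one]
    rwa [he] at hm
  rw [hHmem] at huH
  push_neg at huH
  obtain ⟨a, rfl⟩ := hs'
  exact (key a u).2 huH.2
end

section
/- If p is prime, then the only translation-invariant set of bases of a rank-2 matroid on Z_p is the set of all 2-element subsets of Z_p (the uniform matroid U_{2,p}). -/
/-!
A translation-invariant family `B` of pairs is determined by its difference set
`D = {d | {0, d} ∈ B}`. Exchanging `e` out of `{0, e}` against `{c, c + e}` shows that
`D + c ⊆ D` whenever `c ∉ D`. If some `c ≠ 0` were missing from `D`, then `D` would be stable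
under adding multiples of `c`; for `p` prime these reach every element, in particular `0`,
which is never in `D` because bases have two elements. Hence `D = {0}ᶜ` and `B` consists of
all pairs.
-/

def differenceSet {n : ℕ} (B : Set (Finset (ZMod n))) : Set (ZMod n) :=
  {d | ({0, d} : Finset (ZMod n)) ∈ B}

namespace TransInvariant

variable {n : ℕ} {B : Set (Finset (ZMod n))}

theorem pair_mem_iff (hinv : TransInvariant n B) (a b : ZMod n) :
    ({a, b} : Finset (ZMod n)) ∈ B ↔ b - a ∈ differenceSet B := by
  constructor
  · intro h
    simpa [differenceSet, neg_add_eq_sub] using hinv (-a) _ h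
  · intro h
    simpa using hinv a _ h

theorem zero_notMem_differenceSet (hcard : ∀ s ∈ B, s.card = 2) :
    (0 : ZMod n) ∉ differenceSet B := by
  intro h
  simpa using hcard _ h

theorem add_mem_differenceSet (hcard : ∀ s ∈ B, s.card = 2) (hinv : TransInvariant n B)
    (hexch : ExchangeAxiom B) {c e : ZMod n} (hc : c ∉ differenceSet B)
    (he : e ∈ differenceSet B) : c + e ∈ differenceSet B := by
  rcases eq_or_ne c 0 with rfl | hc0
  · simpa using he
  have he0 : e ≠ 0 := by rintro rfl; exact zero_notMem_differenceSet hcard he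
  have hY : ({c, c + e} : Finset (ZMod n)) ∈ B := by simpa [hinv.pair_mem_iff] using he
  have he_notMem : e ∉ ({c, c + e} : Finset (ZMod n)) := by
    simp only [Finset.mem_insert, Finset.mem_singleton, not_or]
    exact ⟨fun h => hc (h ▸ he), fun h => hc0 (by simpa using h)⟩
  obtain ⟨y, hyY, -, hy⟩ := hexch _ he _ hY e (by simp) he_notMem
  have hyD : y ∈ differenceSet B := by
    rw [Finset.erase_insert_of_ne he0.symm, Finset.erase_singleton, insert_empty_eq,
      Finset.pair_comm] at hy
    exact hy
  rcases Finset.mem_insert.1 hyY with rfl | hy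
  · exact absurd hyD hc
  · exact Finset.mem_singleton.1 hy ▸ hyD

theorem nsmul_add_mem_differenceSet (hcard : ∀ s ∈ B, s.card = 2) (hinv : TransInvariant n B)
    (hexch : ExchangeAxiom B) {c e : ZMod n} (hc : c ∉ differenceSet B)
    (he : e ∈ differenceSet B) (k : ℕ) : k • c + e ∈ differenceSet B := by
  induction k with
  | zero => simpa using he
  | succ k ih =>
    rw [succ_nsmul', add_assoc]
    exact add_mem_differenceSet hcard hinv hexch hc ih

theorem differenceSet_eq_of_prime {p : ℕ} [Fact p.Prime] {B : Set (Finset (ZMod p))}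
    (hcard : ∀ s ∈ B, s.card = 2) (hne : B.Nonempty) (hinv : TransInvariant p B)
    (hexch : ExchangeAxiom B) : differenceSet B = {0}ᶜ := by
  obtain ⟨s, hs⟩ := hne
  obtain ⟨a, b, -, rfl⟩ := Finset.card_eq_two.1 (hcard _ hs)
  have he : b - a ∈ differenceSet B := (hinv.pair_mem_iff a b).1 hs
  refine Set.Subset.antisymm (fun d hd => ?_) (fun c hc0 => ?_)
  · rintro rfl; exact zero_notMem_differenceSet hcard hd
  by_contra hc
  have hk : ((-(b - a)) / c).val • c + (b - a) = 0 := by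
    rw [nsmul_eq_mul, ZMod.natCast_zmod_val, div_mul_cancel₀ _ hc0, neg_add_cancel]
  exact zero_notMem_differenceSet hcard
    (hk ▸ nsmul_add_mem_differenceSet hcard hinv hexch hc he _)

end TransInvariant

/-- If `p` is prime, the only translation-invariant set of bases of a rank-2 matroid
on `Z_p` is the set of all 2-element subsets (the uniform matroid `U_{2,p}`). -/
theorem stmt_6 (p : ℕ) (hp : p.Prime) (B : Set (Finset (ZMod p)))
    (hcard : ∀ s ∈ B, s.card = 2) (hne : B.Nonempty)
    (hinv : TransInvariant p B) (hexch : ExchangeAxiom B) :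
    B = {s : Finset (ZMod p) | s.card = 2} := by
  have : Fact p.Prime := ⟨hp⟩
  have hD := TransInvariant.differenceSet_eq_of_prime hcard hne hinv hexch
  ext s
  refine ⟨hcard s, fun hs => ?_⟩
  obtain ⟨a, b, hab, rfl⟩ := Finset.card_eq_two.1 hs
  rw [hinv.pair_mem_iff, hD]
  exact sub_ne_zero_of_ne hab.symm
end

section
/- Let G be a finite group and B a nonempty, G-invariant set of 2-element subsets of G satisfying the matroid basis exchange axiom. Then the set H = {g ∈ G : {e, g} ∉ B} ∪ {e} is a proper subgroup of G, and B = {{a,b} : a⁻¹b ∉ H}. -/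
/-- `B` is invariant under the left multiplication action of `G` on subsets. -/
def LeftInvariant {G : Type*} [Group G] [DecidableEq G] (B : Set (Finset G)) : Prop :=
  ∀ g : G, ∀ s ∈ B, s.image (fun x => g * x) ∈ B

/-- If `B` is a nonempty `G`-invariant set of 2-element subsets of a finite group `G`
satisfying basis exchange, then `H = {g : {1,g} ∉ B} ∪ {1}` is a proper subgroup of `G`
and `B = {{a,b} : a⁻¹ * b ∉ H}`. -/
theorem stmt_8 {G : Type*} [Group G] [Fintype G] [DecidableEq G]
    (B : Set (Finset G)) (hcard : ∀ s ∈ B, s.card = 2) (hne : B.Nonempty)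
    (hinv : LeftInvariant B) (hexch : ExchangeAxiom B) :
    ∃ H : Subgroup G, H ≠ ⊤ ∧
      (H : Set G) = {g : G | ({1, g} : Finset G) ∉ B} ∪ {1} ∧
      B = {s : Finset G | ∃ a b : G, a⁻¹ * b ∉ H ∧ s = {a, b}} := by
  classical
  -- translation invariance in iff form
  have htr : ∀ g a b : G, ({a, b} : Finset G) ∈ B → ({g * a, g * b} : Finset G) ∈ B := by
    intro g a b h
    have := hinv g _ h
    simpa [Finset.image_insert] using this
  have htr' : ∀ g a b : G, ({g * a, g * b} : Finset G) ∈ B → ({a, b} : Finset G) ∈ B := by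
    intro g a b h
    have := htr g⁻¹ _ _ h
    simpa using this
  have hone : ∀ a : G, ({a, a} : Finset G) ∉ B := by
    intro a h
    have := hcard _ h
    simp at this
  -- key: no path of two non-edges jumps over an edge
  have key : ∀ a b c : G, a ≠ b → b ≠ c → ({a, b} : Finset G) ∉ B →
      ({b, c} : Finset G) ∉ B → ({a, c} : Finset G) ∉ B := by
    intro a b c hab hbc hnab hnbc hac
    have hacne : a ≠ c := by
      rintro rfl; exact hone a hac
    set d := b * a⁻¹ * c with hd
    have hY : ({b, d} : Finset G) ∈ B := by
      have := htr (b * a⁻¹) a c hac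
      simpa [hd, mul_assoc] using this
    have hda : d ≠ a := by
      rintro h
      apply hnab
      rw [Finset.pair_comm]
      rwa [h] at hY
    have hdc : d ≠ c := by
      intro h
      apply hab
      have h1 : b * a⁻¹ = 1 := mul_right_cancel (b := c)
        (show b * a⁻¹ * c = 1 * c by rw [← hd, h, one_mul])
      exact (mul_inv_eq_one.mp h1).symm
    have hdb : d ≠ b := by
      intro h
      apply hacne
      have h1 : a⁻¹ * c = 1 := mul_left_cancel (a := b)
        (show b * (a⁻¹ * c) = b * 1 by rw [← mul_assoc, ← hd, h, mul_one])
      exact (inv_mul_eq_one.mp h1)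
    have hdX : d ∈ ({b, d} : Finset G) := by simp
    have hdY : d ∉ ({a, c} : Finset G) := by simp [hda, hdc]
    obtain ⟨y, hyY, hyX, hins⟩ := hexch _ hY _ hac d hdX hdY
    have herase : ({b, d} : Finset G).erase d = {b} := by
      rw [Finset.pair_comm, Finset.erase_insert (by simp [hdb])]
    rw [herase] at hins
    have : y = a ∨ y = c := by simpa using hyY
    rcases this with rfl | rfl
    · exact hnab (by simpa [Finset.pair_comm] using hins)
    · exact hnbc (by simpa [Finset.pair_comm] using hins)
  -- membership characterization without the a ≠ b caveat
  have hmul : ∀ h k : G, ({1, h} : Finset G) ∉ B → ({1, k} : Finset G) ∉ B →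
      ({1, h * k} : Finset G) ∉ B := by
    intro h k hh hk
    rcases eq_or_ne h 1 with rfl | hh1
    · simpa using hk
    rcases eq_or_ne k 1 with rfl | hk1
    · simpa using hh
    have hhk : ({h, h * k} : Finset G) ∉ B := by
      intro hmem
      exact hk (htr' h 1 k (by simpa using hmem))
    exact key 1 h (h * k) (Ne.symm hh1) (by simp [hk1]) hh hhk
  have hinvmem : ∀ h : G, ({1, h} : Finset G) ∉ B → ({1, h⁻¹} : Finset G) ∉ B := by
    intro h hh hmem
    have := htr h 1 h⁻¹ hmem
    simp only [mul_one, mul_inv_cancel] at this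
    exact hh (by rwa [Finset.pair_comm] at this)
  refine ⟨⟨⟨⟨{g : G | ({1, g} : Finset G) ∉ B}, ?_⟩, ?_⟩, ?_⟩, ?_, ?_, ?_⟩
  · intro h k hh hk; exact hmul h k hh hk
  · exact hone 1
  · intro h hh; exact hinvmem h hh
  · intro htop
    obtain ⟨s, hs⟩ := hne
    obtain ⟨a, b, hab, rfl⟩ := Finset.card_eq_two.mp (hcard _ hs)
    have hmem : ({1, a⁻¹ * b} : Finset G) ∈ B := by
      have := htr a⁻¹ a b hs
      simpa using this
    have : a⁻¹ * b ∈ (⊤ : Subgroup G) := trivial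
    rw [← htop] at this
    exact this hmem
  · ext g
    constructor
    · intro hg; exact Or.inl hg
    · rintro (hg | hg)
      · exact hg
      · simp only [Set.mem_singleton_iff] at hg
        subst hg
        exact hone 1
  · ext s
    simp only [Set.mem_setOf_eq]
    constructor
    · intro hs
      obtain ⟨a, b, hab, rfl⟩ := Finset.card_eq_two.mp (hcard _ hs)
      refine ⟨a, b, ?_, rfl⟩
      intro hmem
      exact hmem (by simpa using htr a⁻¹ a b hs)
    · rintro ⟨a, b, hab, rfl⟩
      have hmem : ({1, a⁻¹ * b} : Finset G) ∈ B := by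
        by_contra h
        exact hab h
      have := htr a 1 (a⁻¹ * b) hmem
      simpa using this
end

section
/- Two-dimensional tropical subrepresentations of the boolean regular representation of a finite group G, i.e. nonempty G-invariant sets of 2-element subsets of G satisfying the matroid basis exchange axiom, are in bijection with proper subgroups H of G, via H ↦ {{a,b} : a⁻¹b ∉ H}. -/
section Aux

variable {G : Type*} [Group G] [DecidableEq G]

lemma pair_image (g a b : G) :
    ({a, b} : Finset G).image (fun x => g * x) = {g * a, g * b} := by
  simp [Finset.image_insert]

lemma pair_mem_iff {B : Set (Finset G)} (hinv : LeftInvariant B) (a b : G) :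
    ({a, b} : Finset G) ∈ B ↔ ({1, a⁻¹ * b} : Finset G) ∈ B := by
  constructor
  · intro h
    have := hinv a⁻¹ _ h
    rwa [pair_image, inv_mul_cancel] at this
  · intro h
    have := hinv a _ h
    rwa [pair_image, mul_one, mul_inv_cancel_left] at this

/-- every element lies in some member of B -/
lemma mem_some_basis {B : Set (Finset G)} (hne : B.Nonempty)
    (hcard : ∀ s ∈ B, s.card = 2) (hinv : LeftInvariant B) (b : G) :
    ∃ d : G, d ≠ b ∧ ({b, d} : Finset G) ∈ B := by
  obtain ⟨s, hs⟩ := hne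
  obtain ⟨p, q, hpq, rfl⟩ := Finset.card_eq_two.mp (hcard s hs)
  refine ⟨b * (p⁻¹ * q), ?_, ?_⟩
  · intro h
    have h' : b * (p⁻¹ * q) = b * 1 := by rw [mul_one]; exact h
    exact hpq (inv_mul_eq_one.mp (mul_left_cancel h'))
  · rw [pair_mem_iff hinv, inv_mul_cancel_left]
    exact (pair_mem_iff hinv p q).mp hs

lemma trans_not_mem {B : Set (Finset G)} (hne : B.Nonempty)
    (hcard : ∀ s ∈ B, s.card = 2) (hinv : LeftInvariant B) (hex : ExchangeAxiom B)
    (a b c : G) (h1 : ({a, b} : Finset G) ∉ B) (h2 : ({b, c} : Finset G) ∉ B) :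
    ({a, c} : Finset G) ∉ B := by
  intro hac
  obtain ⟨d, hdb, hbd⟩ := mem_some_basis hne hcard hinv b
  rcases eq_or_ne d a with h | hda
  · exact h1 (by rw [← h, Finset.pair_comm d b]; exact hbd)
  rcases eq_or_ne d c with h | hdc
  · exact h2 (by rw [← h]; exact hbd)
  have hdX : d ∉ ({a, c} : Finset G) := by simp [hda, hdc]
  have hdmem : d ∈ ({b, d} : Finset G) := by simp
  obtain ⟨y, hy, hyX, hins⟩ := hex _ hbd _ hac d hdmem hdX
  have herase : ({b, d} : Finset G).erase d = {b} := by
    rw [Finset.pair_comm, Finset.erase_insert (by simpa using hdb)]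
  rw [herase] at hins
  simp only [Finset.mem_insert, Finset.mem_singleton] at hy
  rcases hy with h | h
  · exact h1 (by rw [← h]; exact hins)
  · exact h2 (by rw [Finset.pair_comm b c, ← h]; exact hins)

lemma exchange_helper (H : Subgroup G) (a b c d : G) (hcd : c⁻¹ * d ∉ H)
    (ha : a ∉ ({c, d} : Finset G)) :
    ∃ y ∈ ({c, d} : Finset G), y ∉ ({a, b} : Finset G) ∧ y⁻¹ * b ∉ H := by
  have key : c⁻¹ * b ∉ H ∨ d⁻¹ * b ∉ H := by
    by_contra h
    push_neg at h
    apply hcd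
    have : (c⁻¹ * b) * (d⁻¹ * b)⁻¹ = c⁻¹ * d := by group
    rw [← this]
    exact mul_mem h.1 (inv_mem h.2)
  simp only [Finset.mem_insert, Finset.mem_singleton, not_or] at ha
  rcases key with hk | hk
  · refine ⟨c, by simp, ?_, hk⟩
    simp only [Finset.mem_insert, Finset.mem_singleton, not_or]
    refine ⟨fun h => ha.1 h.symm, fun h => hk ?_⟩
    rw [h, inv_mul_cancel]
    exact one_mem H
  · refine ⟨d, by simp, ?_, hk⟩
    simp only [Finset.mem_insert, Finset.mem_singleton, not_or]
    refine ⟨fun h => ha.2 h.symm, fun h => hk ?_⟩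
    rw [h, inv_mul_cancel]
    exact one_mem H

end Aux

/-- Two-dimensional tropical subrepresentations of `𝔹[G]`, i.e. nonempty `G`-invariant
sets of 2-element subsets of `G` satisfying basis exchange, are in bijection with
proper subgroups `H` of `G` via `H ↦ {{a,b} : a⁻¹b ∉ H}`. -/
theorem stmt_9 (G : Type*) [Group G] [Fintype G] [DecidableEq G] :
    Set.BijOn (fun H : Subgroup G => ({s | ∃ a b : G, a⁻¹ * b ∉ H ∧ s = {a, b}} : Set (Finset G)))
      {H : Subgroup G | H ≠ ⊤}
      {B : Set (Finset G) | B.Nonempty ∧ (∀ s ∈ B, s.card = 2) ∧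
        LeftInvariant B ∧ ExchangeAxiom B} := by
  have hne_of : ∀ (H : Subgroup G) (a b : G), a⁻¹ * b ∉ H → a ≠ b := by
    intro H a b h heq
    subst heq
    exact h (by rw [inv_mul_cancel]; exact one_mem H)
  have hmem_iff : ∀ (H : Subgroup G) (g : G),
      (({1, g} : Finset G) ∈ {s : Finset G | ∃ a b : G, a⁻¹ * b ∉ H ∧ s = {a, b}}) ↔ g ∉ H := by
    intro H g
    constructor
    · rintro ⟨a, b, hab, hs⟩
      have hane : a ≠ b := hne_of H a b hab
      have ha : a ∈ ({1, g} : Finset G) := by rw [hs]; simp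
      have hb : b ∈ ({1, g} : Finset G) := by rw [hs]; simp
      simp only [Finset.mem_insert, Finset.mem_singleton] at ha hb
      rcases ha with rfl | rfl
      · rcases hb with rfl | rfl
        · exact absurd rfl hane
        · rwa [inv_one, one_mul] at hab
      · rcases hb with rfl | hb
        · intro hg
          exact hab (by simpa using inv_mem hg)
        · subst hb; exact absurd rfl hane
    · intro h
      exact ⟨1, g, by simpa using h, rfl⟩
  constructor
  · -- MapsTo
    intro H hH
    simp only [Set.mem_setOf_eq] at hH ⊢
    refine ⟨?_, ?_, ?_, ?_⟩
    · obtain ⟨g, hg⟩ : ∃ g, g ∉ H := by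
        by_contra h
        push_neg at h
        exact hH ((Subgroup.eq_top_iff' H).mpr h)
      exact ⟨{1, g}, 1, g, by simpa using hg, rfl⟩
    · rintro s ⟨a, b, hab, rfl⟩
      exact Finset.card_eq_two.mpr ⟨a, b, hne_of H a b hab, rfl⟩
    · rintro g s ⟨a, b, hab, rfl⟩
      refine ⟨g * a, g * b, ?_, by rw [pair_image]⟩
      rw [mul_inv_rev, mul_assoc, inv_mul_cancel_left]
      exact hab
    · rintro X ⟨a, b, hab, rfl⟩ Y ⟨c, d, hcd, hY⟩ x hx hxY
      subst hY
      have hane : a ≠ b := hne_of H a b hab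
      simp only [Finset.mem_insert, Finset.mem_singleton] at hx
      rcases hx with h | h
      · subst h
        obtain ⟨y, hy, hyX, hyb⟩ := exchange_helper H x b c d hcd hxY
        refine ⟨y, hy, hyX, ?_⟩
        have herase : ({x, b} : Finset G).erase x = {b} := by
          rw [Finset.erase_insert (by simpa using hane)]
        rw [herase]
        exact ⟨y, b, hyb, rfl⟩
      · subst h
        obtain ⟨y, hy, hyX, hya⟩ := exchange_helper H x a c d hcd hxY
        refine ⟨y, hy, ?_, ?_⟩
        · simp only [Finset.mem_insert, Finset.mem_singleton, not_or] at hyX ⊢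
          exact ⟨hyX.2, hyX.1⟩
        · have herase : ({a, x} : Finset G).erase x = {a} := by
            rw [Finset.pair_comm, Finset.erase_insert (by simpa using hane.symm)]
          rw [herase]
          exact ⟨y, a, hya, rfl⟩
  constructor
  · -- InjOn
    intro H₁ h₁ H₂ h₂ heq
    have key : ∀ g : G, g ∉ H₁ ↔ g ∉ H₂ := by
      intro g
      rw [← hmem_iff H₁ g, ← hmem_iff H₂ g]
      exact Set.ext_iff.mp heq {1, g}
    ext g
    exact not_iff_not.mp (key g)
  · -- SurjOn
    rintro B ⟨hne, hcard, hinv, hex⟩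
    have one_mem' : ({1, (1:G)} : Finset G) ∉ B := by
      intro h
      have := hcard _ h
      simp at this
    have Hmul : ∀ {h k : G}, ({1, h} : Finset G) ∉ B → ({1, k} : Finset G) ∉ B →
        ({1, h * k} : Finset G) ∉ B := by
      intro h k hh hk
      have h2 : ({h, h * k} : Finset G) ∉ B := by
        intro hm
        exact hk (by rwa [pair_mem_iff hinv, inv_mul_cancel_left] at hm)
      exact trans_not_mem hne hcard hinv hex 1 h (h * k) hh h2
    have Hinv : ∀ {g : G}, ({1, g} : Finset G) ∉ B → ({1, g⁻¹} : Finset G) ∉ B := by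
      intro g hg hm
      apply hg
      have h1 : ({g⁻¹, 1} : Finset G) ∈ B := by rw [Finset.pair_comm]; exact hm
      have := (pair_mem_iff hinv g⁻¹ 1).mp h1
      rwa [inv_inv, mul_one] at this
    set H : Subgroup G :=
      { carrier := {g | ({1, g} : Finset G) ∉ B}
        one_mem' := one_mem'
        mul_mem' := fun ha hb => Hmul ha hb
        inv_mem' := fun ha => Hinv ha } with hHdef
    have hmemH : ∀ g : G, g ∈ H ↔ ({1, g} : Finset G) ∉ B := fun g => Iff.rfl
    refine ⟨H, ?_, ?_⟩
    · simp only [Set.mem_setOf_eq]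
      intro htop
      obtain ⟨s, hs⟩ := hne
      obtain ⟨p, q, hpq, rfl⟩ := Finset.card_eq_two.mp (hcard s hs)
      have : p⁻¹ * q ∈ H := htop ▸ Subgroup.mem_top _
      exact (hmemH _).mp this ((pair_mem_iff hinv p q).mp hs)
    · ext s
      simp only [Set.mem_setOf_eq]
      constructor
      · rintro ⟨a, b, hab, rfl⟩
        have : ({1, a⁻¹ * b} : Finset G) ∈ B := not_not.mp ((hmemH _).not.mp hab)
        exact (pair_mem_iff hinv a b).mpr this
      · intro hs
        obtain ⟨a, b, hab, rfl⟩ := Finset.card_eq_two.mp (hcard s hs)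
        refine ⟨a, b, ?_, rfl⟩
        rw [hmemH, not_not]
        exact (pair_mem_iff hinv a b).mp hs
end

section
/- Let G be a finite group and B a G-invariant set of 3-element subsets of G satisfying the matroid basis exchange axiom. If f_{g,gh} ⊆ B then f_{g,g⁻¹} ⊆ B or f_{g,h} ⊆ B. -/
/-- The orbit `f_{g,h} = {{a, a*g, a*h} : a ∈ G}`. -/
def tripleOrbit {G : Type*} [Group G] [DecidableEq G] (g h : G) : Set (Finset G) :=
  {s | ∃ a : G, s = {a, a * g, a * h}}

/-!
Exchange `g h` out of the basis `{1, g, g h}` against its translate `g⁻¹ • {1, g, g h} = {g⁻¹, 1, h}`.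
Unless `g h = g⁻¹` (and then `{1, g, g⁻¹}` is already a basis), the element brought in is `g⁻¹` or
`h`, giving the basis `{1, g, g⁻¹}` or `{1, g, h}`; by invariance the whole orbit follows.
-/

theorem tripleOrbit_subset_iff {G : Type*} [Group G] [DecidableEq G] {B : Set (Finset G)}
    (hB : LeftInvariant B) (g k : G) : tripleOrbit g k ⊆ B ↔ ({1, g, k} : Finset G) ∈ B := by
  refine ⟨fun h => h ⟨1, by simp⟩, fun hmem => ?_⟩
  rintro s ⟨a, rfl⟩
  simpa [Finset.image_insert] using hB a _ hmem

theorem ExchangeAxiom.exists_exchange_triple {α : Type*} [DecidableEq α] {B : Set (Finset α)}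
    (hB : ExchangeAxiom B) {a b c : α} {Y : Finset α} (hX : ({a, b, c} : Finset α) ∈ B)
    (hY : Y ∈ B) (hcY : c ∉ Y) (hca : c ≠ a) (hcb : c ≠ b) :
    ∃ y ∈ Y, y ∉ ({a, b, c} : Finset α) ∧ ({a, b, y} : Finset α) ∈ B := by
  obtain ⟨y, hyY, hyX, hy⟩ := hB _ hX _ hY c (by simp) hcY
  have herase : ({a, b, c} : Finset α).erase c = {a, b} := by
    ext x
    simp only [Finset.mem_erase, Finset.mem_insert, Finset.mem_singleton]
    grind
  refine ⟨y, hyY, hyX, ?_⟩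
  rwa [herase, Finset.insert_comm, Finset.pair_comm] at hy

theorem stmt_12_general {G : Type*} [Group G] [DecidableEq G]
    (B : Set (Finset G))
    (hinv : LeftInvariant B) (hexch : ExchangeAxiom B)
    (g h : G) (hg : g ≠ 1) (hh : h ≠ 1) (hgh : g * h ≠ 1)
    (h1 : tripleOrbit g (g * h) ⊆ B) :
    tripleOrbit g g⁻¹ ⊆ B ∨ tripleOrbit g h ⊆ B := by
  simp only [tripleOrbit_subset_iff hinv] at h1 ⊢
  by_cases hinvg : g * h = g⁻¹
  · exact .inl (hinvg ▸ h1)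
  have hY : ({g⁻¹, 1, h} : Finset G) ∈ B := by simpa [Finset.image_insert] using hinv g⁻¹ _ h1
  have hghY : g * h ∉ ({g⁻¹, 1, h} : Finset G) := by
    simp only [Finset.mem_insert, Finset.mem_singleton, mul_eq_right, not_or]
    exact ⟨hinvg, hgh, hg⟩
  obtain ⟨y, hyY, hyX, hy⟩ :=
    hexch.exists_exchange_triple h1 hY hghY hgh (fun e => hh (mul_eq_left.mp e))
  simp only [Finset.mem_insert, Finset.mem_singleton] at hyY
  rcases hyY with rfl | rfl | rfl
  · exact .inl hy
  · simp at hyX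
  · exact .inr hy

/-- If `f_{g,g*h} ⊆ B` then `f_{g,g⁻¹} ⊆ B` or `f_{g,h} ⊆ B`. -/
theorem stmt_12 {G : Type*} [Group G] [Fintype G] [DecidableEq G]
    (B : Set (Finset G)) (hcard : ∀ s ∈ B, s.card = 3)
    (hinv : LeftInvariant B) (hexch : ExchangeAxiom B)
    (g h : G) (hg : g ≠ 1) (hh : h ≠ 1) (hgh : g * h ≠ 1)
    (h1 : tripleOrbit g (g * h) ⊆ B) :
    tripleOrbit g g⁻¹ ⊆ B ∨ tripleOrbit g h ⊆ B :=
  stmt_12_general B hinv hexch g h hg hh hgh h1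
end

section
/- Let G be a finite group and B a G-invariant set of 3-element subsets of G satisfying the matroid basis exchange axiom. If f_{g,g^k} ⊆ B for some k ≥ 2 (with g, g^k, e distinct), then f_{g,g²} ⊆ B. -/
lemma orbit_subset {G : Type*} [Group G] [DecidableEq G] {B : Set (Finset G)}
    (hinv : LeftInvariant B) {g h : G} (hmem : ({1, g, h} : Finset G) ∈ B) :
    tripleOrbit g h ⊆ B := by
  rintro s ⟨a, rfl⟩
  have h2 := hinv a _ hmem
  have himg : ({1, g, h} : Finset G).image (fun x => a * x) = {a, a * g, a * h} := by
    simp [Finset.image_insert]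
  rwa [himg] at h2

/-- If `f_{g,g^k} ⊆ B` for some `k ≥ 2` (with `1, g, g^k` distinct), then `f_{g,g²} ⊆ B`. -/
theorem stmt_13 {G : Type*} [Group G] [Fintype G] [DecidableEq G]
    (B : Set (Finset G)) (hcard : ∀ s ∈ B, s.card = 3)
    (hinv : LeftInvariant B) (hexch : ExchangeAxiom B)
    (g : G) (k : ℕ) (hk : 2 ≤ k) (hg : g ≠ 1) (hgk : g ^ k ≠ 1) (hggk : g ^ k ≠ g)
    (h1 : tripleOrbit g (g ^ k) ⊆ B) :
    tripleOrbit g (g ^ 2) ⊆ B := by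
  induction k using Nat.strong_induction_on with
  | _ k IH =>
  -- Case 1 : g^k = g^2
  by_cases hc1 : g ^ k = g ^ 2
  · rwa [hc1] at h1
  have hX : ({1, g, g ^ k} : Finset G) ∈ B := h1 ⟨1, by simp⟩
  -- Case 2 : g^(k+1) = 1, i.e. g^k = g⁻¹
  by_cases hc2 : g * g ^ k = 1
  · have h2 := hinv g _ hX
    have himg : ({1, g, g ^ k} : Finset G).image (fun x => g * x) = {1, g, g ^ 2} := by
      ext x
      simp [hc2, sq]
      tauto
    rw [himg] at h2
    exact orbit_subset hinv h2
  -- Main case : k ≥ 3 and exchange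
  have hk3 : 3 ≤ k := by
    rcases Nat.lt_or_ge k 3 with h | h
    · interval_cases k
      · exact absurd rfl hc1
    · exact h
  have hpow : g⁻¹ * g ^ k = g ^ (k - 1) := by
    rw [show k = (k - 1) + 1 by omega, pow_succ']
    exact inv_mul_cancel_left g _
  have hY : ({g⁻¹, 1, g ^ (k - 1)} : Finset G) ∈ B := by
    have := h1 ⟨g⁻¹, by rw [inv_mul_cancel, hpow]⟩
    exact this
  have hkk1 : g ^ k ≠ g ^ (k - 1) := by
    intro h
    apply hg
    have : g ^ (k - 1) * g = g ^ (k - 1) * 1 := by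
      rw [mul_one, ← pow_succ, show k - 1 + 1 = k by omega, h]
    exact mul_left_cancel this
  have hxY : g ^ k ∉ ({g⁻¹, 1, g ^ (k - 1)} : Finset G) := by
    simp only [Finset.mem_insert, Finset.mem_singleton]
    push_neg
    refine ⟨?_, hgk, hkk1⟩
    intro h
    apply hc2
    rw [h, mul_inv_cancel]
  obtain ⟨y, hyY, hyX, hins⟩ := hexch _ hX _ hY (g ^ k) (by simp) hxY
  have herase : ({1, g, g ^ k} : Finset G).erase (g ^ k) = {1, g} := by
    ext x
    simp only [Finset.mem_erase, Finset.mem_insert, Finset.mem_singleton]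
    constructor
    · rintro ⟨hne, h | h | h⟩ <;> tauto
    · rintro (h | h)
      · subst h; exact ⟨Ne.symm hgk, Or.inl rfl⟩
      · subst h; exact ⟨Ne.symm hggk, Or.inr (Or.inl rfl)⟩
  rw [herase] at hins
  simp only [Finset.mem_insert, Finset.mem_singleton] at hyY hyX
  push_neg at hyX
  rcases hyY with rfl | rfl | rfl
  · -- y = g⁻¹ : {g⁻¹, 1, g} ∈ B, translate by g to get {1, g, g²}
    have h2 := hinv g _ hins
    have himg : (insert g⁻¹ ({1, g} : Finset G)).image (fun x => g * x) = {1, g, g ^ 2} := by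
      ext x
      simp [sq]
    rw [himg] at h2
    exact orbit_subset hinv h2
  · exact absurd rfl hyX.1
  · -- y = g^(k-1) : {1, g, g^(k-1)} ∈ B, induct
    have hmem : ({1, g, g ^ (k - 1)} : Finset G) ∈ B := by
      have : (insert (g ^ (k - 1)) ({1, g} : Finset G)) = {1, g, g ^ (k - 1)} := by
        ext x; simp; tauto
      rwa [this] at hins
    have hgk1 : g ^ (k - 1) ≠ 1 := by
      intro h
      apply hggk
      rw [show k = (k - 1) + 1 by omega, pow_succ, h, one_mul]
    have hggk1 : g ^ (k - 1) ≠ g := by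
      intro h
      apply hc1
      rw [show k = (k - 1) + 1 by omega, pow_succ, h, sq]
    exact IH (k - 1) (by omega) (by omega) hgk1 hggk1 (orbit_subset hinv hmem)
end

section
/- Let G be a finite group and H a subgroup with index [G:H] > 2. Then the set B = {{a,b,c} ⊆ G : a⁻¹b ∉ H, a⁻¹c ∉ H, b⁻¹c ∉ H} is nonempty, invariant under left multiplication, and satisfies the matroid strong basis exchange axiom for 3-element subsets. -/
section aux
variable {G : Type*} [Group G] [DecidableEq G] (H : Subgroup G)

lemma aux_not_mem_iff (a b : G) : a⁻¹ * b ∉ H ↔ (a : G ⧸ H) ≠ b := by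
  rw [Ne, QuotientGroup.eq]

lemma aux_memB (a b c : G) (hab : (a : G ⧸ H) ≠ b) (hac : (a : G ⧸ H) ≠ c)
    (hbc : (b : G ⧸ H) ≠ c) :
    ({a, b, c} : Finset G) ∈
      {s : Finset G | ∃ a b c : G, a⁻¹ * b ∉ H ∧ a⁻¹ * c ∉ H ∧ b⁻¹ * c ∉ H ∧ s = {a, b, c}} := by
  exact ⟨a, b, c, (aux_not_mem_iff H a b).2 hab, (aux_not_mem_iff H a c).2 hac,
    (aux_not_mem_iff H b c).2 hbc, rfl⟩

lemma aux_key (X Y : Finset G)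
    (hY : Y ∈ {s : Finset G | ∃ a b c : G,
      a⁻¹ * b ∉ H ∧ a⁻¹ * c ∉ H ∧ b⁻¹ * c ∉ H ∧ s = {a, b, c}})
    (a u v : G) (hX : X = {a, u, v})
    (hau : (a : G ⧸ H) ≠ u) (hav : (a : G ⧸ H) ≠ v) (huv : (u : G ⧸ H) ≠ v)
    (hx : a ∉ Y) :
    ∃ y ∈ Y, y ∉ X ∧ insert y (X.erase a) ∈
      {s : Finset G | ∃ a b c : G,
        a⁻¹ * b ∉ H ∧ a⁻¹ * c ∉ H ∧ b⁻¹ * c ∉ H ∧ s = {a, b, c}} := by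
  obtain ⟨d, e, f, hde, hdf, hef, rfl⟩ := hY
  rw [aux_not_mem_iff] at hde hdf hef
  -- pick y among d,e,f with coset different from u and v
  have hpick : ∃ y ∈ ({d, e, f} : Finset G), (y : G ⧸ H) ≠ u ∧ (y : G ⧸ H) ≠ v := by
    by_cases h1 : (d : G ⧸ H) ≠ u ∧ (d : G ⧸ H) ≠ v
    · exact ⟨d, by simp, h1⟩
    by_cases h2 : (e : G ⧸ H) ≠ u ∧ (e : G ⧸ H) ≠ v
    · exact ⟨e, by simp, h2⟩
    by_cases h3 : (f : G ⧸ H) ≠ u ∧ (f : G ⧸ H) ≠ v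
    · exact ⟨f, by simp, h3⟩
    push_neg at h1 h2 h3
    exfalso
    by_cases hd' : (d : G ⧸ H) = u
    · by_cases he' : (e : G ⧸ H) = u
      · exact hde (hd'.trans he'.symm)
      · have he2 := h2 he'
        by_cases hf' : (f : G ⧸ H) = u
        · exact hdf (hd'.trans hf'.symm)
        · exact hef (he2.trans (h3 hf').symm)
    · have hd2 := h1 hd'
      by_cases he' : (e : G ⧸ H) = v
      · exact hde (hd2.trans he'.symm)
      · have he2 : (e : G ⧸ H) = u := by tauto
        by_cases hf' : (f : G ⧸ H) = v
        · exact hdf (hd2.trans hf'.symm)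
        · exact hef (he2.trans (by tauto : (f : G ⧸ H) = u).symm)
  obtain ⟨y, hyY, hyu, hyv⟩ := hpick
  have hya : y ≠ a := fun h => hx (h ▸ hyY)
  have hyu' : y ≠ u := fun h => hyu (congrArg _ h)
  have hyv' : y ≠ v := fun h => hyv (congrArg _ h)
  have herase : X.erase a = {u, v} := by
    rw [hX]
    have : a ∉ ({u, v} : Finset G) := by
      simp only [Finset.mem_insert, Finset.mem_singleton]
      rintro (rfl | rfl)
      · exact hau rfl
      · exact hav rfl
    exact Finset.erase_insert this
  refine ⟨y, hyY, ?_, ?_⟩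
  · rw [hX]
    simp only [Finset.mem_insert, Finset.mem_singleton]
    rintro (rfl | rfl | rfl) <;> [exact hya rfl; exact hyu' rfl; exact hyv' rfl]
  · rw [herase]
    exact aux_memB H y u v hyu hyv huv

end aux

/-- If `H` is a subgroup of a finite group `G` with index greater than 2, then
`B = {{a,b,c} : a⁻¹b ∉ H, a⁻¹c ∉ H, b⁻¹c ∉ H}` is nonempty, invariant under left
multiplication, and satisfies the matroid basis exchange axiom. -/
theorem stmt_14 {G : Type*} [Group G] [Fintype G] [DecidableEq G]
    (H : Subgroup G) (hH : 2 < H.index) :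
    ({s | ∃ a b c : G, a⁻¹ * b ∉ H ∧ a⁻¹ * c ∉ H ∧ b⁻¹ * c ∉ H ∧ s = {a, b, c}} :
        Set (Finset G)).Nonempty ∧
      LeftInvariant
        {s | ∃ a b c : G, a⁻¹ * b ∉ H ∧ a⁻¹ * c ∉ H ∧ b⁻¹ * c ∉ H ∧ s = {a, b, c}} ∧
      ExchangeAxiom
        {s : Finset G | ∃ a b c : G,
          a⁻¹ * b ∉ H ∧ a⁻¹ * c ∉ H ∧ b⁻¹ * c ∉ H ∧ s = {a, b, c}} := by
  refine ⟨?_, ?_, ?_⟩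
  · -- nonempty : index > 2 means at least 3 cosets
    have hcard : 2 < Nat.card (G ⧸ H) := hH
    have : ∃ q1 q2 q3 : G ⧸ H, q1 ≠ q2 ∧ q1 ≠ q3 ∧ q2 ≠ q3 := by
      have : Fintype (G ⧸ H) := Fintype.ofFinite _
      have : DecidableEq (G ⧸ H) := Classical.decEq _
      rw [Nat.card_eq_fintype_card] at hcard
      obtain ⟨q1⟩ : Nonempty (G ⧸ H) := Fintype.card_pos_iff.1 (by omega)
      obtain ⟨q2, hq2⟩ := Fintype.exists_ne_of_one_lt_card (by omega) q1
      have h3 : 0 < (Finset.univ.erase q1 |>.erase q2).card := by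
        have h1 := Finset.card_erase_of_mem (Finset.mem_univ q1)
        have h2 := Finset.card_erase_of_mem
          (Finset.mem_erase.2 ⟨hq2, Finset.mem_univ q2⟩)
        rw [h2, h1]
        simp only [Finset.card_univ]
        omega
      obtain ⟨q3, hq3⟩ := Finset.card_pos.1 h3
      simp only [Finset.mem_erase] at hq3
      exact ⟨q1, q2, q3, (Ne.symm hq2), (Ne.symm hq3.2.1), (Ne.symm hq3.1)⟩
    obtain ⟨q1, q2, q3, h12, h13, h23⟩ := this
    obtain ⟨a, rfl⟩ := QuotientGroup.mk_surjective q1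
    obtain ⟨b, rfl⟩ := QuotientGroup.mk_surjective q2
    obtain ⟨c, rfl⟩ := QuotientGroup.mk_surjective q3
    exact ⟨{a, b, c}, aux_memB H a b c h12 h13 h23⟩
  · -- left invariant
    rintro g s ⟨a, b, c, hab, hac, hbc, rfl⟩
    refine ⟨g * a, g * b, g * c, ?_, ?_, ?_, ?_⟩
    · simpa [mul_assoc] using hab
    · simpa [mul_assoc] using hac
    · simpa [mul_assoc] using hbc
    · simp [Finset.image_insert]
  · -- exchange
    rintro X ⟨a, b, c, hab, hac, hbc, rfl⟩ Y hY x hx hxY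
    rw [aux_not_mem_iff] at hab hac hbc
    simp only [Finset.mem_insert, Finset.mem_singleton] at hx
    rcases hx with rfl | rfl | rfl
    · exact aux_key H _ Y hY x b c rfl hab hac hbc hxY
    · exact aux_key H _ Y hY x a c (by ext z; simp; tauto) (Ne.symm hab) hbc hac hxY
    · exact aux_key H _ Y hY x a b (by ext z; simp; tauto) (Ne.symm hac) (Ne.symm hbc) hab hxY
end

section
/- Let n = 2k with k > 2 and let B be a translation-invariant set of 3-element subsets of Z_n satisfying the matroid basis exchange axiom. For any unit u ∈ Z_n^×, f_{u, ku} ⊆ B if and only if f_{u, (k+1)u} ⊆ B. -/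
/-- The translation orbit `f_{i,j} = {{a, a+i, a+j} : a ∈ Z_n}`. -/
def tripleOrbitZ (n : ℕ) (i j : ZMod n) : Set (Finset (ZMod n)) :=
  {s | ∃ a : ZMod n, s = {a, a + i, a + j}}

lemma cast_mul_ne (n : ℕ) [NeZero n] (e : ZMod n) (hu : IsUnit e) (a b : ℕ)
    (ha : a < n) (hb : b < n) (hab : a ≠ b) : (a : ZMod n) * e ≠ (b : ZMod n) * e := by
  intro h
  obtain ⟨v, rfl⟩ := hu
  have h2 : (a : ZMod n) = (b : ZMod n) := by
    have h3 := congrArg (fun x => x * ((v⁻¹ : (ZMod n)ˣ) : ZMod n)) h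
    simpa [mul_assoc] using h3
  have h4 := congrArg ZMod.val h2
  rw [ZMod.val_cast_of_lt ha, ZMod.val_cast_of_lt hb] at h4
  exact hab h4

lemma aux1 (n k : ℕ) (hnk : n = 2 * k) (hk : 2 < k)
    (B : Set (Finset (ZMod n))) (hinv : TransInvariant n B) (hexch : ExchangeAxiom B)
    (e : ZMod n) (hu : IsUnit e)
    (hA : ({0, e, (k : ZMod n) * e} : Finset (ZMod n)) ∈ B) :
    ({0, e, ((k : ZMod n) + 1) * e} : Finset (ZMod n)) ∈ B := by
  haveI : NeZero n := ⟨by omega⟩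
  have key := cast_mul_ne n e hu
  have h2κ : ((k : ZMod n) + k) = 0 := by
    have h : ((k + k : ℕ) : ZMod n) = ((n : ℕ) : ZMod n) := by rw [show k + k = n by omega]
    simpa using h
  have d10 : e ≠ 0 := by
    intro h
    exact key 1 0 (by omega) (by omega) (by omega) (by push_cast; linear_combination h)
  have dκ1 : (k : ZMod n) * e ≠ e := by
    intro h
    exact key k 1 (by omega) (by omega) (by omega) (by push_cast; linear_combination h)
  -- translate of hA by -e
  have hY : ({-e, 0, (k : ZMod n) * e - e} : Finset (ZMod n)) ∈ B := by
    have h1 := hinv (-e) _ hA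
    simp only [Finset.image_insert, Finset.image_singleton] at h1
    rw [show -e + 0 = -e by ring, show -e + e = (0 : ZMod n) by ring,
        show -e + (k : ZMod n) * e = (k : ZMod n) * e - e by ring] at h1
    exact h1
  have henotY : e ∉ ({-e, 0, (k : ZMod n) * e - e} : Finset (ZMod n)) := by
    simp only [Finset.mem_insert, Finset.mem_singleton]
    push_neg
    refine ⟨?_, d10, ?_⟩
    · intro h
      exact key 2 0 (by omega) (by omega) (by omega) (by push_cast; linear_combination h)
    · intro h
      exact key 2 k (by omega) (by omega) (by omega) (by push_cast; linear_combination h)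
  obtain ⟨y, hyY, hyX, hB⟩ := hexch _ hA _ hY e (by simp) henotY
  have herase : ({0, e, (k : ZMod n) * e} : Finset (ZMod n)).erase e
      = {0, (k : ZMod n) * e} := by
    ext x
    simp only [Finset.mem_erase, Finset.mem_insert, Finset.mem_singleton]
    constructor
    · rintro ⟨hne, rfl | rfl | rfl⟩
      · exact Or.inl rfl
      · exact absurd rfl hne
      · exact Or.inr rfl
    · rintro (rfl | rfl)
      · exact ⟨Ne.symm d10, Or.inl rfl⟩
      · exact ⟨dκ1, Or.inr (Or.inr rfl)⟩
  rw [herase] at hB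
  simp only [Finset.mem_insert, Finset.mem_singleton] at hyY
  rcases hyY with rfl | rfl | rfl
  · -- y = -e : translate by e
    have h1 := hinv e _ hB
    simp only [Finset.image_insert, Finset.image_singleton] at h1
    rw [show e + -e = (0 : ZMod n) by ring, show e + 0 = e by ring,
        show e + (k : ZMod n) * e = ((k : ZMod n) + 1) * e by ring] at h1
    exact h1
  · -- y = 0 : impossible since 0 ∈ X
    exact absurd (by simp) hyX
  · -- y = κe - e : translate by κe + e
    have h1 := hinv ((k : ZMod n) * e + e) _ hB
    simp only [Finset.image_insert, Finset.image_singleton] at h1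
    rw [show (k : ZMod n) * e + e + ((k : ZMod n) * e - e) = (0 : ZMod n) by
          linear_combination e * h2κ,
        show (k : ZMod n) * e + e + 0 = ((k : ZMod n) + 1) * e by ring,
        show (k : ZMod n) * e + e + (k : ZMod n) * e = e by linear_combination e * h2κ] at h1
    have hset : ({0, ((k : ZMod n) + 1) * e, e} : Finset (ZMod n))
        = {0, e, ((k : ZMod n) + 1) * e} := by
      ext x
      simp only [Finset.mem_insert, Finset.mem_singleton]
      tauto
    rwa [hset] at h1

lemma aux2 (n k : ℕ) (hnk : n = 2 * k) (hk : 2 < k)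
    (B : Set (Finset (ZMod n))) (hinv : TransInvariant n B) (hexch : ExchangeAxiom B)
    (e : ZMod n) (hu : IsUnit e)
    (hA : ({0, e, ((k : ZMod n) + 1) * e} : Finset (ZMod n)) ∈ B) :
    ({0, e, (k : ZMod n) * e} : Finset (ZMod n)) ∈ B := by
  haveI : NeZero n := ⟨by omega⟩
  have key := cast_mul_ne n e hu
  have h2κ : ((k : ZMod n) + k) = 0 := by
    have h : ((k + k : ℕ) : ZMod n) = ((n : ℕ) : ZMod n) := by rw [show k + k = n by omega]
    simpa using h
  have d10 : e ≠ 0 := by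
    intro h
    exact key 1 0 (by omega) (by omega) (by omega) (by push_cast; linear_combination h)
  have dκ10 : ((k : ZMod n) + 1) * e ≠ 0 := by
    intro h
    exact key (k+1) 0 (by omega) (by omega) (by omega) (by push_cast; linear_combination h)
  -- translate of hA by e
  have hY : ({e, e + e, ((k : ZMod n) + 2) * e} : Finset (ZMod n)) ∈ B := by
    have h1 := hinv e _ hA
    simp only [Finset.image_insert, Finset.image_singleton] at h1
    rw [show e + 0 = e by ring,
        show e + ((k : ZMod n) + 1) * e = ((k : ZMod n) + 2) * e by ring] at h1
    exact h1
  have h0notY : (0 : ZMod n) ∉ ({e, e + e, ((k : ZMod n) + 2) * e} : Finset (ZMod n)) := by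
    simp only [Finset.mem_insert, Finset.mem_singleton]
    push_neg
    refine ⟨Ne.symm d10, ?_, ?_⟩
    · intro h
      exact key 0 2 (by omega) (by omega) (by omega) (by push_cast; linear_combination h)
    · intro h
      exact key 0 (k+2) (by omega) (by omega) (by omega) (by push_cast; linear_combination h)
  obtain ⟨y, hyY, hyX, hB⟩ := hexch _ hA _ hY 0 (by simp) h0notY
  have herase : ({0, e, ((k : ZMod n) + 1) * e} : Finset (ZMod n)).erase 0
      = {e, ((k : ZMod n) + 1) * e} := by
    ext x
    simp only [Finset.mem_erase, Finset.mem_insert, Finset.mem_singleton]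
    constructor
    · rintro ⟨hne, rfl | rfl | rfl⟩
      · exact absurd rfl hne
      · exact Or.inl rfl
      · exact Or.inr rfl
    · rintro (rfl | rfl)
      · exact ⟨d10, Or.inr (Or.inl rfl)⟩
      · exact ⟨dκ10, Or.inr (Or.inr rfl)⟩
  rw [herase] at hB
  simp only [Finset.mem_insert, Finset.mem_singleton] at hyY
  rcases hyY with rfl | rfl | rfl
  · -- y = e : impossible since e ∈ X
    exact absurd (by simp) hyX
  · -- y = e + e : translate by -e
    have h1 := hinv (-e) _ hB
    simp only [Finset.image_insert, Finset.image_singleton] at h1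
    rw [show -e + (e + e) = e by ring, show -e + e = (0 : ZMod n) by ring,
        show -e + ((k : ZMod n) + 1) * e = (k : ZMod n) * e by ring] at h1
    have hset : ({e, 0, (k : ZMod n) * e} : Finset (ZMod n))
        = {0, e, (k : ZMod n) * e} := by
      ext x
      simp only [Finset.mem_insert, Finset.mem_singleton]
      tauto
    rwa [hset] at h1
  · -- y = (κ+2)e : translate by κe - e
    have h1 := hinv ((k : ZMod n) * e - e) _ hB
    simp only [Finset.image_insert, Finset.image_singleton] at h1
    rw [show (k : ZMod n) * e - e + ((k : ZMod n) + 2) * e = e by linear_combination e * h2κ,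
        show (k : ZMod n) * e - e + e = (k : ZMod n) * e by ring,
        show (k : ZMod n) * e - e + ((k : ZMod n) + 1) * e = (0 : ZMod n) by
          linear_combination e * h2κ] at h1
    have hset : ({e, (k : ZMod n) * e, 0} : Finset (ZMod n))
        = {0, e, (k : ZMod n) * e} := by
      ext x
      simp only [Finset.mem_insert, Finset.mem_singleton]
      tauto
    rwa [hset] at h1

/-- For `n = 2k` with `k > 2` and a translation-invariant matroid basis set `B` of
3-element subsets of `Z_n`, for any unit `u` we have `f_{u,ku} ⊆ B ↔ f_{u,(k+1)u} ⊆ B`. -/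
theorem stmt_17 (n k : ℕ) (hnk : n = 2 * k) (hk : 2 < k)
    (B : Set (Finset (ZMod n))) (hcard : ∀ s ∈ B, s.card = 3)
    (hinv : TransInvariant n B) (hexch : ExchangeAxiom B) (u : (ZMod n)ˣ) :
    tripleOrbitZ n (u : ZMod n) ((k : ZMod n) * u) ⊆ B ↔
      tripleOrbitZ n (u : ZMod n) (((k : ZMod n) + 1) * u) ⊆ B := by
  constructor
  · intro h s hs
    obtain ⟨a, rfl⟩ := hs
    have hA : ({0, (u : ZMod n), (k : ZMod n) * u} : Finset (ZMod n)) ∈ B := by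
      apply h
      exact ⟨0, by simp⟩
    have hA' := aux1 n k hnk hk B hinv hexch (u : ZMod n) u.isUnit hA
    have h1 := hinv a _ hA'
    simp only [Finset.image_insert, Finset.image_singleton] at h1
    rw [show a + 0 = a by ring] at h1
    exact h1
  · intro h s hs
    obtain ⟨a, rfl⟩ := hs
    have hA' : ({0, (u : ZMod n), ((k : ZMod n) + 1) * u} : Finset (ZMod n)) ∈ B := by
      apply h
      exact ⟨0, by simp⟩
    have hA := aux2 n k hnk hk B hinv hexch (u : ZMod n) u.isUnit hA'
    have h1 := hinv a _ hA
    simp only [Finset.image_insert, Finset.image_singleton] at h1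
    rw [show a + 0 = a by ring] at h1
    exact h1
end

section
/- Let n be odd, u ∈ Z_n^× a unit, and k ∈ Z_n with k ≠ 0, 1 (so f_{u,ku} is a well-defined orbit). Then the set B of all 3-element subsets of Z_n except the orbit f_{u,ku} = {{a, a+u, a+ku} : a ∈ Z_n} satisfies the matroid strong basis exchange axiom if and only if k ∉ {-1, 2, (n+1)/2}. -/
/-!
The orbit `f_{u,ku}` is the set of translates of `D = {0, u, ku}`. When the differences of `D`
are pairwise distinct, two distinct translates meet in at most one point, and deleting such a
family from the `r`-subsets leaves the bases of a (sparse paving) matroid: if `Y \ X` offers two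
candidates `y`, the triples `X - x + y` share the pair `X - x`, so they are not both deleted.
As `2` is a unit, the differences of `{0, 1, k}` are distinct exactly when it is not an
arithmetic progression, i.e. `k ∉ {-1, 2, 1/2}`. In each of these three cases the orbit is
`f_{v,2v}` for a unit `v`, and then the pair `{v, 2v}` lies in two orbit triples, which for
`n ≥ 5` produces an explicit failure of exchange; for `n = 3` every 3-subset lies in the orbit.
-/

open Finset Pointwise

theorem exchangeAxiom_sdiff_of_pairwise {α : Type*} [DecidableEq α] {r : ℕ}
    {F : Set (Finset α)} (hF : F.Pairwise fun A B => #(A ∩ B) + 1 < r) :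
    ExchangeAxiom ({s | #s = r} \ F) := by
  rintro X ⟨hX : #X = r, -⟩ Y ⟨hY : #Y = r, hYF⟩ x hx hxY
  have hS : #(X.erase x) + 1 = r := (card_erase_add_one hx).trans hX
  have hcard : ∀ y ∉ X, #(insert y (X.erase x)) = r := fun y hy => by
    rw [card_insert_of_notMem fun h => hy (mem_of_mem_erase h), hS]
  obtain ⟨y₁, hy₁⟩ : (Y \ X).Nonempty := sdiff_nonempty.mpr fun hYX =>
    hxY (eq_of_subset_of_card_le hYX (by omega) ▸ hx)
  rw [mem_sdiff] at hy₁
  by_cases hy₂ : ∃ y₂ ∈ Y, y₂ ∉ X ∧ y₂ ≠ y₁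
  · obtain ⟨y₂, hy₂Y, hy₂X, hne⟩ := hy₂
    by_contra! hnone
    have hF₁ := not_not.mp fun h => hnone y₁ hy₁.1 hy₁.2 ⟨hcard y₁ hy₁.2, h⟩
    have hF₂ := not_not.mp fun h => hnone y₂ hy₂Y hy₂X ⟨hcard y₂ hy₂X, h⟩
    have hdistinct : insert y₁ (X.erase x) ≠ insert y₂ (X.erase x) := fun h => by
      have := h ▸ mem_insert_self y₁ (X.erase x)
      simp only [mem_insert, mem_erase] at this
      tauto
    have hshared :=
      card_le_card (subset_inter (subset_insert y₁ (X.erase x)) (subset_insert y₂ _))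
    have hsmall := hF hF₁ hF₂ hdistinct
    omega
  · push Not at hy₂
    refine ⟨y₁, hy₁.1, hy₁.2, ?_⟩
    have hYsub : Y ⊆ insert y₁ (X.erase x) := fun z hz => by
      by_cases hzX : z ∈ X
      · exact mem_insert_of_mem (mem_erase.mpr ⟨fun h => hxY (h ▸ hz), hzX⟩)
      · exact hy₂ z hz hzX ▸ mem_insert_self _ _
    rw [← eq_of_subset_of_card_le hYsub (by rw [hcard y₁ hy₁.2, hY])]
    exact ⟨hY, hYF⟩

-- That is, `D` is a Sidon set.
def HasDistinctDifferences {G : Type*} [AddGroup G] (D : Finset G) : Prop :=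
  ∀ a ∈ D, ∀ b ∈ D, ∀ c ∈ D, ∀ d ∈ D, a ≠ b → a - b = c - d → a = c

theorem HasDistinctDifferences.image {G H : Type*} [AddGroup G] [AddGroup H] [DecidableEq H]
    {D : Finset G} (hD : HasDistinctDifferences D) {f : G →+ H} (hf : Function.Injective f) :
    HasDistinctDifferences (D.image f) := by
  simp only [HasDistinctDifferences, forall_mem_image]
  intro a ha b hb c hc d hd hab h
  rw [← map_sub, ← map_sub] at h
  exact congrArg f (hD a ha b hb c hc d hd (fun h => hab (h ▸ rfl)) (hf h))

theorem HasDistinctDifferences.card_inter_vadd_le_one {G : Type*} [AddCommGroup G]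
    [DecidableEq G] {D : Finset G} (hD : HasDistinctDifferences D) {a b : G} (hab : a ≠ b) :
    #((a +ᵥ D) ∩ (b +ᵥ D)) ≤ 1 := by
  refine card_le_one.mpr fun p hp q hq => ?_
  simp only [mem_inter, mem_vadd_finset, vadd_eq_add] at hp hq
  obtain ⟨⟨d₁, hd₁, rfl⟩, ⟨d₃, hd₃, hp⟩⟩ := hp
  obtain ⟨⟨d₂, hd₂, rfl⟩, ⟨d₄, hd₄, hq⟩⟩ := hq
  by_contra hpq
  have h₁₃ := hD d₁ hd₁ d₂ hd₂ d₃ hd₃ d₄ hd₄ (fun h => hpq (h ▸ rfl))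
    (by linear_combination (norm := abel) hq - hp)
  rw [h₁₃] at hp
  exact hab (add_right_cancel hp).symm

/-- A three-element set has distinct differences unless `2` is a zero divisor or the set is an
arithmetic progression; for `{0, 1, k}` the progressions are `k = -1, 2, 1/2`. -/
theorem hasDistinctDifferences_zero_one_k {R : Type*} [CommRing R] [DecidableEq R] {k : R}
    (h2 : IsUnit (2 : R)) (hk0 : k ≠ 0) (hk1 : k ≠ 1) (hkm1 : k ≠ -1) (hk2 : k ≠ 2)
    (hk : 2 * k ≠ 1) : HasDistinctDifferences ({0, 1, k} : Finset R) := by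
  have : Nontrivial R := nontrivial_of_ne k 0 hk0
  have h10 : (1 : R) ≠ 0 := one_ne_zero
  have h20 : (2 : R) ≠ 0 := h2.ne_zero
  have h2k0 : 2 * k ≠ 0 := fun h => hk0 (h2.mul_right_eq_zero.mp h)
  have h2k2 : 2 * k ≠ 2 := fun h => hk1 (h2.mul_left_cancel (h.trans (mul_one 2).symm))
  simp only [HasDistinctDifferences, mem_insert, mem_singleton]
  rintro a (rfl | rfl | rfl) b (rfl | rfl | rfl) c (rfl | rfl | rfl) d (rfl | rfl | rfl) hab h <;>
    first
    | rfl
    | exact absurd (by linear_combination h) hab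
    | exact absurd (by linear_combination h) h10
    | exact absurd (by linear_combination -h) h10
    | exact absurd (by linear_combination h) h20
    | exact absurd (by linear_combination -h) h20
    | exact absurd (by linear_combination h) hk0
    | exact absurd (by linear_combination -h) hk0
    | exact absurd (by linear_combination h) hk1
    | exact absurd (by linear_combination -h) hk1
    | exact absurd (by linear_combination h) hkm1
    | exact absurd (by linear_combination -h) hkm1
    | exact absurd (by linear_combination h) hk2
    | exact absurd (by linear_combination -h) hk2
    | exact absurd (by linear_combination h) hk
    | exact absurd (by linear_combination -h) hk
    | exact absurd (by linear_combination h) h2k0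
    | exact absurd (by linear_combination -h) h2k0
    | exact absurd (by linear_combination h) h2k2
    | exact absurd (by linear_combination -h) h2k2

section TripleOrbit

variable {n : ℕ}

theorem insert_add_eq_vadd (a i j : ZMod n) :
    ({a, a + i, a + j} : Finset (ZMod n)) = a +ᵥ ({0, i, j} : Finset (ZMod n)) := by
  simp [vadd_finset_insert]

theorem pairwise_card_inter_tripleOrbitZ {i j : ZMod n}
    (h : HasDistinctDifferences ({0, i, j} : Finset (ZMod n))) :
    (tripleOrbitZ n i j).Pairwise fun A B => #(A ∩ B) ≤ 1 := by
  rintro _ ⟨a, rfl⟩ _ ⟨b, rfl⟩ hAB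
  rw [insert_add_eq_vadd, insert_add_eq_vadd] at *
  exact h.card_inter_vadd_le_one fun hab => hAB (hab ▸ rfl)

theorem tripleOrbitZ_comm (i j : ZMod n) : tripleOrbitZ n i j = tripleOrbitZ n j i := by
  simp only [tripleOrbitZ, pair_comm]

theorem tripleOrbitZ_subset_neg (i j : ZMod n) :
    tripleOrbitZ n i j ⊆ tripleOrbitZ n (-i) (j - i) := by
  rintro _ ⟨a, rfl⟩
  refine ⟨a + i, ?_⟩
  rw [add_neg_cancel_right, add_add_sub_cancel, insert_comm]

theorem tripleOrbitZ_neg (i j : ZMod n) : tripleOrbitZ n (-i) (j - i) = tripleOrbitZ n i j := by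
  refine (tripleOrbitZ_subset_neg i j).antisymm' ?_
  simpa using tripleOrbitZ_subset_neg (-i) (j - i)

theorem exists_tripleOrbitZ_eq_two_mul (u : (ZMod n)ˣ) {k : ZMod n}
    (hk : k = -1 ∨ k = 2 ∨ 2 * k = 1) :
    ∃ v : (ZMod n)ˣ, tripleOrbitZ n u (k * u) = tripleOrbitZ n v (2 * v) := by
  obtain rfl | rfl | hk := hk
  · refine ⟨u, ?_⟩
    rw [neg_one_mul, tripleOrbitZ_comm, ← tripleOrbitZ_neg, neg_neg, sub_neg_eq_add, two_mul]
  · exact ⟨u, rfl⟩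
  · refine ⟨(IsUnit.of_mul_eq_one_right 2 hk).unit * u, ?_⟩
    rw [tripleOrbitZ_comm, Units.val_mul, IsUnit.unit_spec, ← mul_assoc, hk, one_mul]

theorem nonempty_and_exchangeAxiom_sdiff_tripleOrbitZ (u : (ZMod n)ˣ) {k : ZMod n}
    (h2 : IsUnit (2 : ZMod n)) (hk0 : k ≠ 0) (hk1 : k ≠ 1) (hkm1 : k ≠ -1) (hk2 : k ≠ 2)
    (hk : 2 * k ≠ 1) :
    ({s : Finset (ZMod n) | #s = 3} \ tripleOrbitZ n u (k * u)).Nonempty ∧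
      ExchangeAxiom ({s : Finset (ZMod n) | #s = 3} \ tripleOrbitZ n u (k * u)) := by
  have : Nontrivial (ZMod n) := nontrivial_of_ne k 0 hk0
  have hD : HasDistinctDifferences ({0, (u : ZMod n), k * u} : Finset (ZMod n)) := by
    simpa [image_insert] using (hasDistinctDifferences_zero_one_k h2 hk0 hk1 hkm1 hk2 hk).image
      (f := AddMonoidHom.mulRight (u : ZMod n)) fun x y => (Units.mul_left_inj u).mp
  have hpair := pairwise_card_inter_tripleOrbitZ hD
  have h2u : 2 * (u : ZMod n) ≠ 0 := (h2.mul u.isUnit).ne_zero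
  refine ⟨⟨{0, (u : ZMod n), 2 * (u : ZMod n)}, ?_, fun hmem => ?_⟩,
    exchangeAxiom_sdiff_of_pairwise (hpair.mono' fun _ _ h => by omega)⟩
  · refine card_eq_three.mpr ⟨0, u, 2 * u, u.ne_zero.symm, h2u.symm, fun h => ?_, rfl⟩
    exact u.ne_zero (by linear_combination -h)
  · have hne : ({0, (u : ZMod n), 2 * (u : ZMod n)} : Finset (ZMod n)) ≠ {0, ↑u, k * ↑u} :=
      fun h => by
        have : 2 * (u : ZMod n) ∈ ({0, ↑u, k * ↑u} : Finset (ZMod n)) := h ▸ by simp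
        simp only [mem_insert, mem_singleton] at this
        rcases this with h | h | h
        · exact h2u h
        · exact u.ne_zero (by linear_combination h)
        · exact hk2 ((Units.mul_left_inj u).mp h).symm
    have hinter := hpair hmem ⟨0, by simp⟩ hne
    have hsub : ({0, (u : ZMod n)} : Finset (ZMod n)) ⊆
        {0, (u : ZMod n), 2 * (u : ZMod n)} ∩ {0, ↑u, k * ↑u} := by
      simp [insert_subset_iff]
    have := card_le_card hsub
    rw [card_pair u.ne_zero.symm] at this
    omega

/-- The pair `{w, 2w}` lies in the orbit triples `{0, w, 2w}` and `{w, 2w, 3w}`, so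
`X = {w, 2w, 4w}` cannot trade `4w` for either element `0, 3w` of `Y = {0, w, 3w}` outside `X`. -/
theorem not_exchangeAxiom_sdiff_tripleOrbitZ_two_mul (h5 : 5 ≤ n) (v : (ZMod n)ˣ) :
    ¬ ExchangeAxiom ({s : Finset (ZMod n) | #s = 3} \ tripleOrbitZ n v (2 * v)) := by
  have hc : ∀ c : ℕ, 0 < c → c < 5 → (c : ZMod n) * v ≠ 0 := fun c hc0 hc5 h => by
    rw [Units.mul_left_eq_zero, ZMod.natCast_eq_zero_iff] at h
    exact absurd (Nat.le_of_dvd hc0 h) (by omega)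
  set w : ZMod n := ↑v
  have h1 : w ≠ 0 := by simpa using hc 1 (by omega) (by omega)
  have h2 : 2 * w ≠ 0 := by simpa using hc 2 (by omega) (by omega)
  have h3 : 3 * w ≠ 0 := by simpa using hc 3 (by omega) (by omega)
  have h4 : 4 * w ≠ 0 := by simpa using hc 4 (by omega) (by omega)
  have hxY : 4 * w ∉ ({0, w, 3 * w} : Finset (ZMod n)) := by
    simp only [mem_insert, mem_singleton]
    grind
  obtain ⟨hX, hY⟩ :
      ({w, 2 * w, 4 * w} : Finset (ZMod n)) ∈ {s | #s = 3} \ tripleOrbitZ n w (2 * w) ∧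
        ({0, w, 3 * w} : Finset (ZMod n)) ∈ {s | #s = 3} \ tripleOrbitZ n w (2 * w) := by
    refine ⟨⟨card_eq_three.mpr ⟨_, _, _, by grind, by grind, by grind, rfl⟩, ?_⟩,
      ⟨card_eq_three.mpr ⟨_, _, _, by grind, by grind, by grind, rfl⟩, ?_⟩⟩ <;>
    · rintro ⟨a, ha⟩
      simp only [Finset.ext_iff, mem_insert, mem_singleton] at ha
      have := (ha a).2 (by simp)
      have := (ha (a + w)).2 (by simp)
      have := (ha (a + 2 * w)).2 (by simp)
      grind
  intro hex
  obtain ⟨y, hyY, hyX, hy⟩ := hex _ hX _ hY (4 * w) (by simp) hxY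
  have herase : ({w, 2 * w, 4 * w} : Finset (ZMod n)).erase (4 * w) = {w, 2 * w} := by
    ext z
    simp only [mem_erase, mem_insert, mem_singleton]
    grind
  rw [herase] at hy
  simp only [mem_insert, mem_singleton] at hyY
  rcases hyY with rfl | rfl | rfl
  · exact hy.2 ⟨0, by simp⟩
  · exact hyX (by simp)
  · exact hy.2 ⟨w, by ext z; simp only [mem_insert, mem_singleton]; grind⟩

end TripleOrbit

theorem univ_mem_tripleOrbitZ_three (u : (ZMod 3)ˣ) {k : ZMod 3} (hk0 : k ≠ 0) (hk1 : k ≠ 1) :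
    (univ : Finset (ZMod 3)) ∈ tripleOrbitZ 3 u (k * u) :=
  ⟨0, by revert u k; decide⟩

theorem ZMod.isUnit_two_of_odd {n : ℕ} (hn : Odd n) : IsUnit (2 : ZMod n) := by
  simpa using (ZMod.isUnit_iff_coprime 2 n).mpr (Nat.coprime_two_left.mpr hn)

theorem ZMod.eq_natCast_half_iff {n : ℕ} (hn : Odd n) {k : ZMod n} :
    k = ((n + 1) / 2 : ℕ) ↔ 2 * k = 1 := by
  have hhalf := congrArg (Nat.cast : ℕ → ZMod n) (Nat.mul_div_cancel' hn.add_one.two_dvd)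
  push_cast at hhalf
  rw [ZMod.natCast_self, zero_add] at hhalf
  exact ⟨fun h => h ▸ hhalf,
    fun h => (isUnit_two_of_odd hn).mul_left_cancel (h.trans hhalf.symm)⟩

/-- For `n` odd, a unit `u` of `Z_n` and `k ≠ 0, 1`, the set of all 3-element subsets of
`Z_n` minus the orbit `f_{u,ku}` forms the set of bases of a matroid (nonempty and
satisfying basis exchange) if and only if `k ∉ {-1, 2, (n+1)/2}`. -/
theorem stmt_19 (n : ℕ) (hn : Odd n) (u : (ZMod n)ˣ) (k : ZMod n)
    (hk0 : k ≠ 0) (hk1 : k ≠ 1) :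
    (({s : Finset (ZMod n) | s.card = 3} \
          tripleOrbitZ n (u : ZMod n) (k * u)).Nonempty ∧
        ExchangeAxiom
          ({s : Finset (ZMod n) | s.card = 3} \ tripleOrbitZ n (u : ZMod n) (k * u))) ↔
      (k ≠ -1 ∧ k ≠ 2 ∧ k ≠ (((n + 1) / 2 : ℕ) : ZMod n)) := by
  obtain rfl | rfl | h5 : n = 1 ∨ n = 3 ∨ 5 ≤ n := by obtain ⟨m, rfl⟩ := hn; omega
  · exact absurd (Subsingleton.elim k 0) hk0
  · refine iff_of_false (fun ⟨⟨s, hs, hsO⟩, _⟩ => hsO ?_) fun ⟨hkm1, _⟩ => hkm1 ?_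
    · rw [eq_univ_of_card s (hs.trans (ZMod.card 3).symm)]
      exact univ_mem_tripleOrbitZ_three u hk0 hk1
    · revert k; decide
  simp only [ne_eq, ZMod.eq_natCast_half_iff hn, ← not_or]
  refine ⟨fun ⟨_, hex⟩ hbad => ?_, fun hgood => ?_⟩
  · obtain ⟨v, hv⟩ := exists_tripleOrbitZ_eq_two_mul u hbad
    exact not_exchangeAxiom_sdiff_tripleOrbitZ_two_mul h5 v (hv ▸ hex)
  · obtain ⟨hkm1, hk2, hk⟩ := by simpa only [not_or] using hgood
    exact nonempty_and_exchangeAxiom_sdiff_tripleOrbitZ u (ZMod.isUnit_two_of_odd hn)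
      hk0 hk1 hkm1 hk2 hk
end
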